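/- In the regression lower-bound construction, |L(2i) − L(2i−1)| > 1/(804n); moreover, if z_i = 1 then L(2i−1) < L(2i), and if z_i = 0 then L(2i) < L(2i−1). In particular, which of the two adjacent splits 2i−1 and 2i achieves the smaller loss determines the bit z_i. -/

import Mathlib

/-!
Adding `k` copies of a label `y` to a cluster of `c` labels with sum `s` raises its SSE by
`k (s - c y)² / (c (c + k))`. Passing from split `2i - 1` to split `2i` moves the block of `n`
points at `2i` from the right cluster to the left one, so `m (L(2i) - L(2i-1))` is the increment
of the left cluster minus that of the right one. The `T = 100 n²` points labelled `0` at `2i - 1`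
and `1` at `2i + 1` make `|s - c z_i| ≥ T` for the cluster whose heavy label differs from `z_i`
and `≤ n²` for the other; the increment of the former is then at least `n / 2`, that of the
latter at most `n / 10⁴`.
-/

open Finset

/-- SSE of the data points of a multiset dataset whose feature value lies in range `R`. -/
noncomputable def SSE (data : Multiset (ℕ × ℝ)) (R : Finset ℕ) : ℝ :=
  let d := data.filter fun p => p.1 ∈ R
  if d ≠ 0 then
    (d.map fun p => p.2 ^ 2).sum - ((d.map fun p => p.2).sum) ^ 2 / (Multiset.card d : ℝ)
  else 0

/-- Mean squared loss of split `j ∈ {0,…,N}`. -/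
noncomputable def L (N : ℕ) (data : Multiset (ℕ × ℝ)) (j : ℕ) : ℝ :=
  (1 / (Multiset.card data : ℝ)) *
    (SSE data (Finset.Icc 1 j) + SSE data (Finset.Icc (j + 1) N))

/-- The regression lower-bound dataset: for each `k ∈ {1,…,n}`, `B = n` copies of `(2k, z_k)`;
`T = 100n²` copies of `(2i−1, 0)`; and `T` copies of `(2i+1, 1)`. -/
def regData (n i : ℕ) (z : ℕ → ℝ) : Multiset (ℕ × ℝ) :=
  (∑ k ∈ Finset.Icc 1 n, Multiset.replicate n (2 * k, z k))
  + Multiset.replicate (100 * n ^ 2) (2 * i - 1, (0 : ℝ))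
  + Multiset.replicate (100 * n ^ 2) (2 * i + 1, (1 : ℝ))

noncomputable def sse (d : Multiset ℝ) : ℝ :=
  (d.map (· ^ 2)).sum - d.sum ^ 2 / Multiset.card d

/-- No emptiness guard is needed: on the empty multiset both sums vanish and `0 / 0 = 0`. -/
theorem SSE_eq_sse (data : Multiset (ℕ × ℝ)) (R : Finset ℕ) :
    SSE data R = sse ((data.filter fun p => p.1 ∈ R).map Prod.snd) := by
  unfold SSE sse
  dsimp only
  split_ifs with h
  · simp [Multiset.map_map]
  · rw [not_not.mp h]
    simp

theorem sse_add_replicate {d : Multiset ℝ} (hd : d ≠ 0) (k : ℕ) (y : ℝ) :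
    sse (d + Multiset.replicate k y) =
      sse d + k * (d.sum - Multiset.card d * y) ^ 2 /
        (Multiset.card d * (Multiset.card d + k)) := by
  have hc : (0 : ℝ) < Multiset.card d := by exact_mod_cast Multiset.card_pos.mpr hd
  unfold sse
  simp only [Multiset.map_add, Multiset.map_replicate, Multiset.sum_add, Multiset.sum_replicate,
    Multiset.card_add, Multiset.card_replicate, nsmul_eq_mul, Nat.cast_add]
  field_simp
  ring

theorem far_gain_sub_near_gain_gt {n E D u t : ℝ} (hn : 1 ≤ n) (hE : 100 * n ^ 2 ≤ E)
    (hu : |u| ≤ n ^ 2) (hD : 100 * n ^ 2 ≤ D) (hD' : D ≤ 101 * n ^ 2)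
    (ht : 100 * n ^ 2 ≤ |t|) :
    n / 4 < n * t ^ 2 / (D * (D + n)) - n * u ^ 2 / (E * (E + n)) := by
  have hn0 : 0 < n := by linarith
  have hT : 0 < 100 * n ^ 2 := by positivity
  have near : n * u ^ 2 / (E * (E + n)) ≤ n / 10000 := by
    have hE0 : 0 < E := by linarith
    rw [div_le_div_iff₀ (by positivity) (by norm_num)]
    have hu2 : u ^ 2 ≤ n ^ 4 := by nlinarith [sq_abs u, abs_nonneg u]
    have hEE : (100 * n ^ 2) * (100 * n ^ 2) ≤ E * (E + n) := by nlinarith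
    nlinarith
  have far : n / 2 ≤ n * t ^ 2 / (D * (D + n)) := by
    have hD0 : 0 < D := by linarith
    rw [le_div_iff₀ (by positivity)]
    have ht2 : (100 * n ^ 2) ^ 2 ≤ t ^ 2 := by nlinarith [sq_abs t]
    have hn2 : n ≤ n ^ 2 := by nlinarith
    have hDD : D * (D + n) ≤ (101 * n ^ 2) * (102 * n ^ 2) := by nlinarith
    nlinarith
  linarith

section RegData

variable (n i : ℕ) (z : ℕ → ℝ)

def regBlocks (s : Finset ℕ) : Multiset (ℕ × ℝ) :=
  ∑ k ∈ s, Multiset.replicate n (2 * k, z k)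

def regLeftPart : Multiset (ℕ × ℝ) :=
  regBlocks n z (Ico 1 i) + Multiset.replicate (100 * n ^ 2) (2 * i - 1, 0)

def regRightPart : Multiset (ℕ × ℝ) :=
  regBlocks n z (Ico (i + 1) (n + 1)) + Multiset.replicate (100 * n ^ 2) (2 * i + 1, 1)

variable {n i z}

theorem exists_eq_of_mem_regBlocks {s : Finset ℕ} {a : ℕ × ℝ} (h : a ∈ regBlocks n z s) :
    ∃ k ∈ s, a = (2 * k, z k) := by
  obtain ⟨k, hk, ha⟩ := Multiset.mem_sum.mp h
  exact ⟨k, hk, Multiset.eq_of_mem_replicate ha⟩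

theorem card_regBlocks_le {s : Finset ℕ} (hs : s ⊆ Icc 1 n) :
    Multiset.card (regBlocks n z s) ≤ n ^ 2 := by
  have := Finset.card_le_card hs
  simp only [regBlocks, Multiset.card_sum, Multiset.card_replicate, sum_const, smul_eq_mul,
    Nat.card_Icc, Nat.add_sub_cancel] at this ⊢
  rw [sq]
  exact Nat.mul_le_mul_right n this

theorem sum_snd_regBlocks_mem_Icc (hz : ∀ k, z k = 0 ∨ z k = 1) (s : Finset ℕ) :
    ((regBlocks n z s).map Prod.snd).sum ∈ Set.Icc 0 (Multiset.card (regBlocks n z s) : ℝ) := by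
  have hlabel : ∀ y ∈ (regBlocks n z s).map Prod.snd, 0 ≤ y ∧ y ≤ 1 := by
    simp only [Multiset.mem_map]
    rintro y ⟨a, ha, rfl⟩
    obtain ⟨k, -, rfl⟩ := exists_eq_of_mem_regBlocks ha
    rcases hz k with h | h <;> simp [h]
  refine ⟨Multiset.sum_nonneg fun y hy => (hlabel y hy).1, ?_⟩
  simpa using Multiset.sum_le_card_nsmul _ 1 fun y hy => (hlabel y hy).2

theorem fst_mem_of_mem_regLeftPart (h1 : 1 ≤ i) {a : ℕ × ℝ} (ha : a ∈ regLeftPart n i z) :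
    a.1 ∈ Icc 1 (2 * i - 1) := by
  rw [mem_Icc]
  rcases Multiset.mem_add.mp ha with ha | ha
  · obtain ⟨k, hk, rfl⟩ := exists_eq_of_mem_regBlocks ha
    simp only [mem_Ico] at hk
    omega
  · rw [Multiset.eq_of_mem_replicate ha]
    omega

theorem fst_mem_of_mem_regRightPart (hin : i ≤ n) {a : ℕ × ℝ}
    (ha : a ∈ regRightPart n i z) :
    a.1 ∈ Icc (2 * i + 1) (2 * n + 1) := by
  rw [mem_Icc]
  rcases Multiset.mem_add.mp ha with ha | ha
  · obtain ⟨k, hk, rfl⟩ := exists_eq_of_mem_regBlocks ha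
    simp only [mem_Ico] at hk
    omega
  · rw [Multiset.eq_of_mem_replicate ha]
    omega

theorem regData_eq (h1 : 1 ≤ i) (hin : i ≤ n) :
    regData n i z = regLeftPart n i z + Multiset.replicate n (2 * i, z i) + regRightPart n i z := by
  have hsplit : regBlocks n z (Icc 1 n) =
      regBlocks n z (Ico 1 i) + Multiset.replicate n (2 * i, z i) +
        regBlocks n z (Ico (i + 1) (n + 1)) := by
    rw [regBlocks, ← Finset.Ico_add_one_right_eq_Icc,
      ← sum_Ico_consecutive _ h1 (by omega : i ≤ n + 1),
      sum_eq_sum_Ico_succ_bot (by omega : i < n + 1), add_assoc]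
    rfl
  rw [regData, regLeftPart, regRightPart, ← regBlocks, hsplit]
  abel

theorem card_regData : Multiset.card (regData n i z) = 201 * n ^ 2 := by
  simp only [regData, Multiset.card_add, Multiset.card_sum, Multiset.card_replicate, sum_const,
    Nat.card_Icc, smul_eq_mul, Nat.add_sub_cancel]
  ring

theorem filter_regData (h1 : 1 ≤ i) (hin : i ≤ n) :
    (regData n i z).filter (fun p => p.1 ∈ Icc 1 (2 * i - 1)) = regLeftPart n i z ∧
    (regData n i z).filter (fun p => p.1 ∈ Icc 1 (2 * i)) =
      regLeftPart n i z + Multiset.replicate n (2 * i, z i) ∧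
    (regData n i z).filter (fun p => p.1 ∈ Icc (2 * i) (2 * n + 1)) =
      Multiset.replicate n (2 * i, z i) + regRightPart n i z ∧
    (regData n i z).filter (fun p => p.1 ∈ Icc (2 * i + 1) (2 * n + 1)) =
      regRightPart n i z := by
  have hL := @fst_mem_of_mem_regLeftPart n i z h1
  have hB {a : ℕ × ℝ} (ha : a ∈ Multiset.replicate n (2 * i, z i)) : a.1 = 2 * i := by
    rw [Multiset.eq_of_mem_replicate ha]
  have hR := @fst_mem_of_mem_regRightPart n i z hin
  refine ⟨?_, ?_, ?_, ?_⟩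
  · rw [regData_eq h1 hin, Multiset.filter_add, Multiset.filter_add, Multiset.filter_eq_self.2,
      Multiset.filter_eq_nil.2, Multiset.filter_eq_nil.2, add_zero, add_zero]
    all_goals intro a ha; first | have := hL ha | have := hB ha | have := hR ha
    all_goals simp only [mem_Icc] at *; omega
  · rw [regData_eq h1 hin, Multiset.filter_add, Multiset.filter_add, Multiset.filter_eq_self.2,
      Multiset.filter_eq_self.2, Multiset.filter_eq_nil.2, add_zero]
    all_goals intro a ha; first | have := hL ha | have := hB ha | have := hR ha
    all_goals simp only [mem_Icc] at *; omega
  · rw [regData_eq h1 hin, Multiset.filter_add, Multiset.filter_add, Multiset.filter_eq_nil.2,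
      Multiset.filter_eq_self.2, Multiset.filter_eq_self.2, zero_add]
    all_goals intro a ha; first | have := hL ha | have := hB ha | have := hR ha
    all_goals simp only [mem_Icc] at *; omega
  · rw [regData_eq h1 hin, Multiset.filter_add, Multiset.filter_add, Multiset.filter_eq_nil.2,
      Multiset.filter_eq_nil.2, Multiset.filter_eq_self.2, zero_add, zero_add]
    all_goals intro a ha; first | have := hL ha | have := hB ha | have := hR ha
    all_goals simp only [mem_Icc] at *; omega

theorem regData_loss_sub (h1 : 1 ≤ i) (hin : i ≤ n) :
    201 * (n : ℝ) ^ 2 *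
        (L (2 * n + 1) (regData n i z) (2 * i) - L (2 * n + 1) (regData n i z) (2 * i - 1)) =
      (sse ((regLeftPart n i z).map Prod.snd + Multiset.replicate n (z i)) -
          sse ((regLeftPart n i z).map Prod.snd)) -
        (sse ((regRightPart n i z).map Prod.snd + Multiset.replicate n (z i)) -
          sse ((regRightPart n i z).map Prod.snd)) := by
  obtain ⟨e₁, e₂, e₃, e₄⟩ := filter_regData (z := z) h1 hin
  have hm : (Multiset.card (regData n i z) : ℝ) = 201 * n ^ 2 := by
    exact_mod_cast card_regData
  have hn : (0 : ℝ) < n := by exact_mod_cast (by omega : 0 < n)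
  rw [L, L, hm, Nat.sub_add_cancel (by omega : 1 ≤ 2 * i), SSE_eq_sse, SSE_eq_sse, SSE_eq_sse,
    SSE_eq_sse, e₁, e₂, e₃, e₄, Multiset.map_add, Multiset.map_add, Multiset.map_replicate,
    add_comm (Multiset.replicate n (z i))]
  field_simp
  ring

theorem regData_loss_gap (hi : i ∈ Icc 1 n) (hz : ∀ k, z k = 0 ∨ z k = 1) :
    (z i = 0 → 201 * (n : ℝ) ^ 2 *
        (L (2 * n + 1) (regData n i z) (2 * i) - L (2 * n + 1) (regData n i z) (2 * i - 1)) <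
          -(n / 4)) ∧
    (z i = 1 → n / 4 < 201 * (n : ℝ) ^ 2 *
        (L (2 * n + 1) (regData n i z) (2 * i) - L (2 * n + 1) (regData n i z) (2 * i - 1))) := by
  obtain ⟨h1, hin⟩ := mem_Icc.mp hi
  have hn : 0 < n := by omega
  rw [regData_loss_sub h1 hin, regLeftPart, regRightPart, Multiset.map_add, Multiset.map_add,
    Multiset.map_replicate, Multiset.map_replicate,
    sse_add_replicate (d := _ + Multiset.replicate _ 0) (Multiset.card_pos.mp (by simp [hn])),
    sse_add_replicate (d := _ + Multiset.replicate _ 1) (Multiset.card_pos.mp (by simp [hn]))]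
  obtain ⟨hP0, hP⟩ := sum_snd_regBlocks_mem_Icc hz (n := n) (Ico 1 i)
  obtain ⟨hQ0, hQ⟩ := sum_snd_regBlocks_mem_Icc hz (n := n) (Ico (i + 1) (n + 1))
  have hcP : (Multiset.card (regBlocks n z (Ico 1 i)) : ℝ) ≤ n ^ 2 := by
    exact_mod_cast card_regBlocks_le fun k hk => by simp only [mem_Ico, mem_Icc] at hk ⊢; omega
  have hcQ : (Multiset.card (regBlocks n z (Ico (i + 1) (n + 1))) : ℝ) ≤ n ^ 2 := by
    exact_mod_cast card_regBlocks_le fun k hk => by simp only [mem_Ico, mem_Icc] at hk ⊢; omega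
  simp only [Multiset.sum_add, Multiset.card_add, Multiset.sum_replicate, Multiset.card_replicate,
    Multiset.card_map, nsmul_eq_mul, add_sub_cancel_left, mul_zero, mul_one, add_zero]
  push_cast
  set sP := ((regBlocks n z (Ico 1 i)).map Prod.snd).sum
  set sQ := ((regBlocks n z (Ico (i + 1) (n + 1))).map Prod.snd).sum
  set cP : ℝ := (Multiset.card (regBlocks n z (Ico 1 i)) : ℝ)
  set cQ : ℝ := (Multiset.card (regBlocks n z (Ico (i + 1) (n + 1))) : ℝ)
  have hn1 : (1 : ℝ) ≤ n := by exact_mod_cast hn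
  refine ⟨fun h => ?_, fun h => ?_⟩
  · have := far_gain_sub_near_gain_gt (E := cP + 100 * n ^ 2) (u := sP)
      (D := cQ + 100 * n ^ 2) (t := sQ + 100 * n ^ 2) hn1
      (by linarith) (abs_le.mpr ⟨by linarith, by linarith⟩)
      (by linarith) (by linarith) (le_abs.mpr (Or.inl (by linarith)))
    rw [h, mul_zero, sub_zero, mul_zero, sub_zero]
    linarith
  · have := far_gain_sub_near_gain_gt (E := cQ + 100 * n ^ 2) (u := sQ - cQ)
      (D := cP + 100 * n ^ 2) (t := sP - (cP + 100 * n ^ 2)) hn1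
      (by linarith) (abs_le.mpr ⟨by linarith, by linarith⟩)
      (by linarith) (by linarith) (le_abs.mpr (Or.inr (by linarith)))
    rw [h, mul_one, mul_one, show sQ + 100 * n ^ 2 - (cQ + 100 * n ^ 2) = sQ - cQ by ring]
    linarith

end RegData

theorem reg_gap_reveals_bit_general (n : ℕ) (i : ℕ) (hi : i ∈ Finset.Icc 1 n)
    (z : ℕ → ℝ) (hz : ∀ k, z k = 0 ∨ z k = 1) :
    1 / (804 * (n : ℝ)) <
      |L (2 * n + 1) (regData n i z) (2 * i) - L (2 * n + 1) (regData n i z) (2 * i - 1)| ∧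
    (z i = 1 →
      L (2 * n + 1) (regData n i z) (2 * i - 1) < L (2 * n + 1) (regData n i z) (2 * i)) ∧
    (z i = 0 →
      L (2 * n + 1) (regData n i z) (2 * i) < L (2 * n + 1) (regData n i z) (2 * i - 1)) := by
  obtain ⟨h1, hin⟩ := mem_Icc.mp hi
  obtain ⟨hgap₀, hgap₁⟩ := regData_loss_gap hi hz
  set Δ := L (2 * n + 1) (regData n i z) (2 * i) - L (2 * n + 1) (regData n i z) (2 * i - 1)
  have hn : (0 : ℝ) < n := by exact_mod_cast (by omega : 0 < n)
  have hm : (0 : ℝ) < 201 * n ^ 2 := by positivity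
  have hscale : 1 / (804 * (n : ℝ)) = n / 4 / (201 * n ^ 2) := by field_simp; ring
  have gap₀ : z i = 0 → Δ < -(1 / (804 * n)) := fun h => by
    rw [hscale, ← neg_div, lt_div_iff₀ hm]
    linarith [hgap₀ h]
  have gap₁ : z i = 1 → 1 / (804 * n) < Δ := fun h => by
    rw [hscale, div_lt_iff₀ hm]
    linarith [hgap₁ h]
  have hpos : 0 < 1 / (804 * (n : ℝ)) := by positivity
  refine ⟨?_, fun h => by linarith [gap₁ h], fun h => by linarith [gap₀ h]⟩
  rcases hz i with h | h
  · exact lt_abs.mpr (Or.inr (by linarith [gap₀ h]))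
  · exact lt_abs.mpr (Or.inl (gap₁ h))

/-- In the regression lower-bound construction, the losses of the two adjacent splits `2i−1`
and `2i` differ by more than `1/(804n)`; moreover if `z_i = 1` then `2i−1` is strictly better,
and if `z_i = 0` then `2i` is strictly better, so the better split reveals the bit `z_i`. -/
theorem reg_gap_reveals_bit (n : ℕ) (hn : 1 ≤ n) (i : ℕ) (hi : i ∈ Finset.Icc 1 n)
    (z : ℕ → ℝ) (hz : ∀ k, z k = 0 ∨ z k = 1) :
    1 / (804 * (n : ℝ)) <
      |L (2 * n + 1) (regData n i z) (2 * i) - L (2 * n + 1) (regData n i z) (2 * i - 1)| ∧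
    (z i = 1 →
      L (2 * n + 1) (regData n i z) (2 * i - 1) < L (2 * n + 1) (regData n i z) (2 * i)) ∧
    (z i = 0 →
      L (2 * n + 1) (regData n i z) (2 * i) < L (2 * n + 1) (regData n i z) (2 * i - 1)) :=
  reg_gap_reveals_bit_general n i hi z hz
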